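/- For every p > 1, the maximum of u_p satisfies ‖u_p‖_∞^{p-1} ≥ π²/4, where π²/4 is the first Dirichlet eigenvalue of -d²/dt² on (-1,1). -/

import Mathlib

open Real Set Filter Topology

noncomputable section

/-- `u` is the (unique) positive solution of the one-dimensional Lane–Emden problem
`-u'' = u^p` on `(-1,1)` with `u(-1) = u(1) = 0`; it is even, positive on `(-1,1)`,
decreasing on `[0,1]`, and its sup norm is attained at `0`. -/
def IsLaneEmden (p : ℝ) (u : ℝ → ℝ) : Prop :=
  ContDiff ℝ 2 u ∧
  (∀ t ∈ Ioo (-1 : ℝ) 1, deriv (deriv u) t = -(u t ^ p)) ∧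
  u (-1) = 0 ∧ u 1 = 0 ∧
  (∀ t ∈ Ioo (-1 : ℝ) 1, 0 < u t) ∧
  (∀ t : ℝ, u (-t) = u t) ∧
  (∀ ⦃s t : ℝ⦄, s ∈ Icc (0 : ℝ) 1 → t ∈ Icc (0 : ℝ) 1 → s ≤ t → u t ≤ u s) ∧
  (∀ t ∈ Icc (-1 : ℝ) 1, u t ≤ u 0)

/-!
Sturm comparison with the first Dirichlet eigenfunction `φ t = cos (π t / 2)`: the Wronskian
`u φ' - u' φ` vanishes at `±1`, so by Rolle its derivative `u φ'' - u'' φ = u φ (u^(p-1) - π²/4)`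
vanishes at some interior point, where `u^(p-1) = π²/4`; and `u` is largest at `0`.
-/

def wronskian (f g : ℝ → ℝ) (t : ℝ) : ℝ :=
  f t * deriv g t - deriv f t * g t

theorem hasDerivAt_wronskian {f g : ℝ → ℝ} (hf : ContDiff ℝ 2 f) (hg : ContDiff ℝ 2 g) (t : ℝ) :
    HasDerivAt (wronskian f g) (f t * deriv (deriv g) t - deriv (deriv f) t * g t) t :=
  (((hf.differentiable two_ne_zero t).hasDerivAt.mul
    (hg.differentiable_deriv_two t).hasDerivAt).sub
    ((hf.differentiable_deriv_two t).hasDerivAt.mul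
    (hg.differentiable two_ne_zero t).hasDerivAt)).congr_deriv (by ring)

theorem exists_mem_Ioo_mul_deriv_deriv_eq_deriv_deriv_mul {f g : ℝ → ℝ} {a b : ℝ}
    (hf : ContDiff ℝ 2 f) (hg : ContDiff ℝ 2 g) (hab : a < b)
    (hfa : f a = 0) (hfb : f b = 0) (hga : g a = 0) (hgb : g b = 0) :
    ∃ t ∈ Ioo a b, f t * deriv (deriv g) t = deriv (deriv f) t * g t := by
  obtain ⟨t, ht, hW⟩ := exists_hasDerivAt_eq_zero hab
    (fun t _ => (hasDerivAt_wronskian hf hg t).continuousAt.continuousWithinAt)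
    (by simp [wronskian, hfa, hfb, hga, hgb]) (fun t _ => hasDerivAt_wronskian hf hg t)
  exact ⟨t, ht, sub_eq_zero.mp hW⟩

theorem deriv_deriv_cos_const_mul (c t : ℝ) :
    deriv (deriv fun s => cos (c * s)) t = -(c ^ 2 * cos (c * t)) := by
  have hlin (s : ℝ) : HasDerivAt (fun s => c * s) c s := by
    simpa using (hasDerivAt_id s).const_mul c
  have hcos : deriv (fun s => cos (c * s)) = fun s => -sin (c * s) * c :=
    funext fun s => (hlin s).cos.deriv
  have hsin : HasDerivAt (fun s => -sin (c * s) * c) (-(cos (c * t) * c) * c) t :=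
    (hlin t).sin.neg.mul_const c
  rw [hcos, hsin.deriv]
  ring

theorem IsLaneEmden.exists_mem_Ioo_rpow_sub_one_eq {p : ℝ} {u : ℝ → ℝ} (hu : IsLaneEmden p u) :
    ∃ t ∈ Ioo (-1 : ℝ) 1, u t ^ (p - 1) = π ^ 2 / 4 := by
  obtain ⟨hcd, hode, hum, hup, hpos, -, -, -⟩ := hu
  have hφ : ContDiff ℝ 2 fun s => cos (π / 2 * s) := by fun_prop
  obtain ⟨t, ht, hwr⟩ := exists_mem_Ioo_mul_deriv_deriv_eq_deriv_deriv_mul hcd hφ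
    (by norm_num : (-1 : ℝ) < 1) hum hup (by simp) (by simp)
  refine ⟨t, ht, ?_⟩
  have hcos : 0 < cos (π / 2 * t) :=
    cos_pos_of_mem_Ioo ⟨by nlinarith [pi_pos, ht.1], by nlinarith [pi_pos, ht.2]⟩
  rw [hode t ht, deriv_deriv_cos_const_mul] at hwr
  have hpow : u t ^ p = u t * (π / 2) ^ 2 := by
    apply mul_right_cancel₀ hcos.ne'
    linarith
  rw [rpow_sub_one (hpos t ht).ne', hpow]
  field_simp [(hpos t ht).ne']
  ring

/-- For every `p > 1`, `‖u_p‖_∞^(p-1) ≥ π²/4`, the first Dirichlet eigenvalue of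
`-d²/dt²` on `(-1,1)`. -/
theorem sup_norm_pow_ge_first_eigenvalue
    (u : ℝ → ℝ → ℝ) (hu : ∀ p : ℝ, 1 < p → IsLaneEmden p (u p)) :
    ∀ p : ℝ, 1 < p → π ^ 2 / 4 ≤ u p 0 ^ (p - 1) := by
  intro p hp
  obtain ⟨t, ht, heq⟩ := (hu p hp).exists_mem_Ioo_rpow_sub_one_eq
  obtain ⟨-, -, -, -, hpos, -, -, hmax⟩ := hu p hp
  calc π ^ 2 / 4 = u p t ^ (p - 1) := heq.symm
    _ ≤ u p 0 ^ (p - 1) :=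
      rpow_le_rpow (hpos t ht).le (hmax t (Ioo_subset_Icc_self ht)) (by linarith)
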